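/- For every integer p ≥ 1 and every point x of the torus ℝ²/ℤ², the indicator functions satisfy the Möbius inversion identity 𝟙_{O_{1/p}}(x) = Σ_{d ∣ p, d ≥ 1} μ(p/d) · 𝟙_{L_{1/d}}(x), where μ is the Möbius function; i.e., the indicator of the SL(2,ℤ)-orbit O_{1/p} is the Möbius-weighted alternating sum of the indicators of the torsion subgroups L_{1/d} over divisors d of p. -/

import Mathlib

/-- The integer lattice `ℤ² ⊂ ℝ²`, as an additive subgroup of `Fin 2 → ℝ`. -/
def intLattice : AddSubgroup (Fin 2 → ℝ) where
  carrier := {v | ∀ i, ∃ n : ℤ, v i = (n : ℝ)}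
  zero_mem' := fun i => ⟨0, by simp⟩
  add_mem' := by
    intro a b ha hb i
    obtain ⟨n, hn⟩ := ha i
    obtain ⟨m, hm⟩ := hb i
    exact ⟨n + m, by simp [hn, hm]⟩
  neg_mem' := by
    intro a ha i
    obtain ⟨n, hn⟩ := ha i
    exact ⟨-n, by simp [hn]⟩

/-- The torus `ℝ²/ℤ²`. -/
abbrev Torus : Type := (Fin 2 → ℝ) ⧸ intLattice

/-- The natural action of `SL(2,ℤ)` on `ℝ²` by matrix multiplication on column vectors. -/
noncomputable def sl2zAct (A : Matrix.SpecialLinearGroup (Fin 2) ℤ) (v : Fin 2 → ℝ) :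
    Fin 2 → ℝ :=
  ((A : Matrix (Fin 2) (Fin 2) ℤ).map fun n => (n : ℝ)).mulVec v

/-- The `SL(2,ℤ)`-orbit of the torus point represented by `v ∈ ℝ²`. -/
def torusOrbit (v : Fin 2 → ℝ) : Set Torus :=
  {x | ∃ A : Matrix.SpecialLinearGroup (Fin 2) ℤ,
    (QuotientAddGroup.mk (sl2zAct A v) : Torus) = x}

/-- The `d`-torsion subgroup `L_{1/d} = {(a/d, c/d) mod ℤ²}` of the torus, as a set. -/
def torsionSet (d : ℕ) : Set Torus :=
  {x | ∃ a c : ℤ, (QuotientAddGroup.mk ![(a : ℝ) / d, (c : ℝ) / d] : Torus) = x}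

/-!
A point of the torus lies in `L_{1/d}` iff its additive order divides `d`, and it lies in
`O_{1/p}` iff its order is exactly `p`. Indeed, the orbit consists of the points `(u/p, v/p)`
with `(u, v)` the primitive second column of a matrix in `SL(2,ℤ)`, and such a point has
order `p`; conversely a point `(a/p, c/p)` of order `p` has `gcd(a, c, p) = 1`, and then
`(a, c)` is congruent mod `p` to a primitive vector, namely `B (gcd a c, p)ᵀ` where
`B (gcd a c, 0)ᵀ = (a, c)ᵀ`. With `e` the order of `x`, the identity becomes Möbius inversion
of `[e ∣ n] = ∑_{d ∣ n} [e = d]`.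
-/

open ArithmeticFunction MatrixGroups
open scoped ArithmeticFunction.Moebius

theorem sum_divisors_moebius_mul_ite_dvd {R : Type*} [NonAssocRing R] (e : ℕ) {n : ℕ}
    (hn : n ≠ 0) :
    ∑ d ∈ n.divisors, (μ (n / d) : R) * (if e ∣ d then 1 else 0) =
      if e = n then 1 else 0 := by
  have hinv := (sum_eq_iff_sum_mul_moebius_eq (R := R) (f := fun d => if e = d then 1 else 0)
    (g := fun d => if e ∣ d then 1 else 0)).mp (fun m hm => by
      simp only [Finset.sum_ite_eq, Nat.mem_divisors, hm.ne', ne_eq, not_false_eq_true, and_true])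
    n (Nat.pos_of_ne_zero hn)
  rwa [Nat.sum_divisorsAntidiagonal' (f := fun a b => (μ a : R) * if e ∣ b then 1 else 0)]
    at hinv

lemma addOrderOf_eq_iff_forall_nsmul_eq_zero_iff {G : Type*} [AddMonoid G] {x : G} {k : ℕ} :
    addOrderOf x = k ↔ ∀ n : ℕ, n • x = 0 ↔ k ∣ n := by
  simp only [← addOrderOf_dvd_iff_nsmul_eq_zero, Nat.dvd_right_iff_eq]

lemma Nat.coprime_of_forall_dvd_mul_imp_dvd {k m : ℕ} (hk : k ≠ 0)
    (h : ∀ n, k ∣ n * m → k ∣ n) : Nat.Coprime m k := by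
  have hself : k ∣ k / Nat.gcd m k := h _ <| Dvd.intro (m / Nat.gcd m k) <| by
    rw [Nat.div_mul_right_comm (Nat.gcd_dvd_right m k), Nat.mul_div_assoc _ (Nat.gcd_dvd_left m k)]
  have hdiv : k / Nat.gcd m k = k :=
    Nat.dvd_antisymm (Nat.div_dvd_of_dvd (Nat.gcd_dvd_right m k)) hself
  exact (Nat.div_eq_self.mp hdiv).resolve_left hk

lemma Matrix.SpecialLinearGroup.exists_col_zero_mul_gcd_eq (a c : ℤ) :
    ∃ B : SL(2, ℤ), B 0 0 * Int.gcd a c = a ∧ B 1 0 * Int.gcd a c = c := by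
  rcases Nat.eq_zero_or_pos (Int.gcd a c) with hg | hg
  · exact ⟨1, by simp [Int.gcd_eq_zero_iff.mp hg]⟩
  have hco : IsCoprime (a / Int.gcd a c) (c / Int.gcd a c) :=
    Int.isCoprime_iff_gcd_eq_one.mpr (Int.gcd_div_gcd_div_gcd hg)
  obtain ⟨B, hB0, hB1⟩ := hco.exists_SL2_col 0
  exact ⟨B, by rw [hB0, Int.ediv_mul_cancel (Int.gcd_dvd_left a c)],
    by rw [hB1, Int.ediv_mul_cancel (Int.gcd_dvd_right a c)]⟩

lemma Matrix.SpecialLinearGroup.exists_col_one_modEq {a c m : ℤ}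
    (h : IsCoprime (Int.gcd a c : ℤ) m) :
    ∃ A : SL(2, ℤ), A 0 1 ≡ a [ZMOD m] ∧ A 1 1 ≡ c [ZMOD m] := by
  obtain ⟨B, hB0, hB1⟩ := exists_col_zero_mul_gcd_eq a c
  obtain ⟨E, hE0, hE1⟩ := h.exists_SL2_col 1
  refine ⟨B * E, ?_, ?_⟩ <;>
  simp only [coe_mul, Matrix.mul_apply, Fin.sum_univ_two, hE0, hE1,
    Int.modEq_iff_dvd]
  · exact ⟨-B 0 1, by linear_combination -hB0⟩
  · exact ⟨-B 1 1, by linear_combination -hB1⟩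

lemma mem_intLattice {v : Fin 2 → ℝ} : v ∈ intLattice ↔ ∀ i, ∃ n : ℤ, v i = n :=
  Iff.rfl

noncomputable def fracPoint (p : ℕ) : ℤ × ℤ →+ Torus :=
  (QuotientAddGroup.mk' intLattice).comp
    { toFun := fun v => ![(v.1 : ℝ) / p, (v.2 : ℝ) / p]
      map_zero' := by simp
      map_add' := fun v w => by ext i; fin_cases i <;> simp [add_div] }

lemma fracPoint_apply (p : ℕ) (v : ℤ × ℤ) :
    fracPoint p v = QuotientAddGroup.mk ![(v.1 : ℝ) / p, (v.2 : ℝ) / p] := rfl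

lemma torsionSet_eq_range_fracPoint (d : ℕ) : torsionSet d = Set.range (fracPoint d) := by
  ext x
  simp [torsionSet, fracPoint_apply]

lemma intCast_div_eq_intCast_iff {p : ℕ} (hp : p ≠ 0) {a n : ℤ} :
    (a : ℝ) / p = n ↔ a = p * n := by
  rw [div_eq_iff (Nat.cast_ne_zero.mpr hp), mul_comm]
  exact_mod_cast Iff.rfl

lemma fracPoint_eq_zero_iff {p : ℕ} (hp : p ≠ 0) {v : ℤ × ℤ} :
    fracPoint p v = 0 ↔ (p : ℤ) ∣ v.1 ∧ (p : ℤ) ∣ v.2 := by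
  simp only [fracPoint_apply, QuotientAddGroup.eq_zero_iff, mem_intLattice, Fin.forall_fin_two,
    Matrix.cons_val_zero, Matrix.cons_val_one, intCast_div_eq_intCast_iff hp, Dvd.dvd]

lemma fracPoint_eq_fracPoint_iff {p : ℕ} (hp : p ≠ 0) {v w : ℤ × ℤ} :
    fracPoint p v = fracPoint p w ↔ v.1 ≡ w.1 [ZMOD p] ∧ v.2 ≡ w.2 [ZMOD p] := by
  rw [← sub_eq_zero, ← map_sub, fracPoint_eq_zero_iff hp, Int.modEq_iff_dvd, Int.modEq_iff_dvd,
    dvd_sub_comm, dvd_sub_comm (b := w.2)]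
  rfl

lemma nsmul_eq_zero_iff_mem_range_fracPoint {d : ℕ} (hd : d ≠ 0) {x : Torus} :
    d • x = 0 ↔ x ∈ Set.range (fracPoint d) := by
  constructor
  · obtain ⟨v, rfl⟩ := QuotientAddGroup.mk_surjective x
    rw [← QuotientAddGroup.mk_nsmul, QuotientAddGroup.eq_zero_iff, mem_intLattice]
    intro h
    obtain ⟨⟨a, ha⟩, ⟨c, hc⟩⟩ := And.intro (h 0) (h 1)
    refine ⟨(a, c), congrArg QuotientAddGroup.mk ?_⟩
    ext i
    fin_cases i <;> simp [← ha, ← hc, Nat.cast_ne_zero.mpr hd]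
  · rintro ⟨v, rfl⟩
    rw [← map_nsmul, fracPoint_eq_zero_iff hd]
    simp [nsmul_eq_mul]

lemma mem_torsionSet_iff {d : ℕ} (hd : d ≠ 0) {x : Torus} :
    x ∈ torsionSet d ↔ addOrderOf x ∣ d := by
  rw [addOrderOf_dvd_iff_nsmul_eq_zero, nsmul_eq_zero_iff_mem_range_fracPoint hd,
    torsionSet_eq_range_fracPoint]

lemma nsmul_fracPoint_eq_zero_iff {p : ℕ} (hp : p ≠ 0) (n : ℕ) (v : ℤ × ℤ) :
    n • fracPoint p v = 0 ↔ p ∣ n * Int.gcd v.1 v.2 := by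
  rw [← map_nsmul, fracPoint_eq_zero_iff hp, ← Int.dvd_gcd_iff]
  simp [nsmul_eq_mul, Int.gcd_mul_left]

lemma addOrderOf_fracPoint_eq_iff {p : ℕ} (hp : p ≠ 0) (v : ℤ × ℤ) :
    addOrderOf (fracPoint p v) = p ↔ Nat.Coprime (Int.gcd v.1 v.2) p := by
  simp only [addOrderOf_eq_iff_forall_nsmul_eq_zero_iff, nsmul_fracPoint_eq_zero_iff hp]
  refine ⟨fun h => Nat.coprime_of_forall_dvd_mul_imp_dvd hp fun n => (h n).1, fun h n => ?_⟩
  exact h.symm.dvd_mul_right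

lemma mk_sl2zAct_zero_div (A : SL(2, ℤ)) (p : ℕ) :
    (QuotientAddGroup.mk (sl2zAct A ![0, 1 / (p : ℝ)]) : Torus) = fracPoint p (A 0 1, A 1 1) := by
  rw [fracPoint_apply]
  congr 1
  ext i
  fin_cases i <;> simp [sl2zAct, Matrix.mulVec, dotProduct, Fin.sum_univ_two, div_eq_mul_inv]

lemma mem_torusOrbit_iff {p : ℕ} (hp : p ≠ 0) {x : Torus} :
    x ∈ torusOrbit ![0, 1 / (p : ℝ)] ↔ addOrderOf x = p := by
  constructor
  · rintro ⟨A, rfl⟩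
    rw [mk_sl2zAct_zero_div, addOrderOf_fracPoint_eq_iff hp]
    simp [Int.isCoprime_iff_gcd_eq_one.mp (A.isCoprime_col 1)]
  · intro hx
    obtain ⟨v, rfl⟩ :=
      (nsmul_eq_zero_iff_mem_range_fracPoint hp).mp (hx ▸ addOrderOf_nsmul_eq_zero x)
    have hco : IsCoprime (Int.gcd v.1 v.2 : ℤ) p :=
      Nat.isCoprime_iff_coprime.mpr ((addOrderOf_fracPoint_eq_iff hp v).mp hx)
    obtain ⟨A, h0, h1⟩ := Matrix.SpecialLinearGroup.exists_col_one_modEq hco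
    exact ⟨A, by rw [mk_sl2zAct_zero_div, fracPoint_eq_fracPoint_iff hp]; exact ⟨h0, h1⟩⟩

/-- Möbius inversion for orbit indicators: the indicator of the `SL(2,ℤ)`-orbit `O_{1/p}`
is the Möbius-weighted alternating sum of the indicators of the torsion subgroups
`L_{1/d}` over the divisors `d` of `p`. -/
theorem orbit_indicator_moebius_inversion (p : ℕ) (hp : 1 ≤ p) (x : Torus) :
    Set.indicator (torusOrbit ![0, 1 / (p : ℝ)]) (fun _ => (1 : ℤ)) x
      = ∑ d ∈ Nat.divisors p,
          ArithmeticFunction.moebius (p / d) *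
            Set.indicator (torsionSet d) (fun _ => (1 : ℤ)) x := by
  have hp0 : p ≠ 0 := Nat.one_le_iff_ne_zero.mp hp
  calc Set.indicator (torusOrbit ![0, 1 / (p : ℝ)]) (fun _ => (1 : ℤ)) x
      = if addOrderOf x = p then 1 else 0 := by
        classical simp only [Set.indicator_apply, mem_torusOrbit_iff hp0]
    _ = ∑ d ∈ p.divisors, (μ (p / d) : ℤ) * if addOrderOf x ∣ d then 1 else 0 :=
        (sum_divisors_moebius_mul_ite_dvd _ hp0).symm
    _ = _ := Finset.sum_congr rfl fun d hd => by
        classical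
        simp only [Set.indicator_apply, mem_torsionSet_iff (Nat.pos_of_mem_divisors hd).ne']
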